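/- Let B, C be symmetric positive definite matrices with ρ(kC) < 1. Then the scheme (Ũ^{n+1} − Uⁿ)/k = −BŨ^{n+1} − CUⁿ followed by normalization U^{n+1} = Ũ^{n+1}/‖Ũ^{n+1}‖ is energy diminishing for E(U) = UᵀAU with A = (I − kC)^{-1}(B + C), provided B and C commute (so that A is symmetric positive definite): E(U^{n+1}) ≤ E(Uⁿ). -/

import Mathlib

/-!
Because `B` and `C` commute, `A = (1 - kC)⁻¹ (B + C)` is symmetric positive semidefinite, and the
scheme is the implicit Euler step `Uⁿ = (1 + kA) Ũⁿ⁺¹`. Normalisation keeps `Uⁿ ⬝ᵥ Uⁿ = 1`, so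
`E(Uⁿ)` is the Rayleigh quotient of `A` at `(1 + kA) Ũⁿ⁺¹` and `E(Uⁿ⁺¹)` the one at `Ũⁿ⁺¹`.
Applying `1 + kA` never decreases the Rayleigh quotient: with `a = v ⬝ Av`, `b = Av ⬝ Av`,
`c = v ⬝ v`, `d = Av ⬝ A²v` the claim is `2k (a² - bc) + k² (ab - cd) ≤ 0`, and both brackets are
nonpositive by Cauchy–Schwarz, once for the Euclidean and once for the `A`-inner product.
-/

open Matrix

namespace Matrix
variable {ι : Type*} [Fintype ι]

lemma posDef_one_sub_of_spectrum_lt_one [DecidableEq ι] {M : Matrix ι ι ℝ} (hM : M.IsHermitian)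
    (h : ∀ μ ∈ spectrum ℝ M, μ < 1) : (1 - M).PosDef := by
  have hS : (1 - M).IsHermitian := isHermitian_one.sub hM
  have hpos : ∀ x ∈ spectrum ℝ (1 - M), 0 < x := by
    rw [← map_one (algebraMap ℝ (Matrix ι ι ℝ)), ← spectrum.singleton_sub_eq]
    rintro _ ⟨_, rfl, μ, hμ, rfl⟩
    linarith [h μ hμ]
  exact hS.posDef_iff_eigenvalues_pos.mpr fun i => hpos _ (hS.eigenvalues_mem_spectrum_real i)

open scoped MatrixOrder in
lemma PosDef.inv_mul_posSemidef_of_commute [DecidableEq ι] {S T : Matrix ι ι ℝ} (hS : S.PosDef)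
    (hT : T.PosSemidef) (hST : Commute S T) : (S⁻¹ * T).PosSemidef := by
  have hcomm : Commute S⁻¹ T := by
    simpa only [IsUnit.unit_spec, coe_units_inv] using hST.units_inv_left (u := hS.isUnit.unit)
  exact (hcomm.mul_nonneg hS.inv.posSemidef.nonneg hT.nonneg).posSemidef

lemma dotProduct_sq_le (v w : ι → ℝ) : (v ⬝ᵥ w) ^ 2 ≤ (v ⬝ᵥ v) * (w ⬝ᵥ w) := by
  simpa only [dotProduct, sq] using Finset.sum_mul_sq_le_sq_mul_sq Finset.univ v w

lemma IsHermitian.dotProduct_mulVec_comm {A : Matrix ι ι ℝ} (hA : A.IsHermitian) (x y : ι → ℝ) :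
    x ⬝ᵥ A *ᵥ y = A *ᵥ x ⬝ᵥ y := by
  rw [dotProduct_mulVec, ← mulVec_transpose, ← conjTranspose_eq_transpose_of_trivial, hA.eq]

open scoped MatrixOrder in
lemma PosSemidef.dotProduct_mulVec_sq_le [DecidableEq ι] {A : Matrix ι ι ℝ} (hA : A.PosSemidef)
    (x y : ι → ℝ) : (x ⬝ᵥ A *ᵥ y) ^ 2 ≤ (x ⬝ᵥ A *ᵥ x) * (y ⬝ᵥ A *ᵥ y) := by
  obtain ⟨W, rfl⟩ := CStarAlgebra.nonneg_iff_eq_star_mul_self.mp hA.nonneg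
  have hW : ∀ x y : ι → ℝ, x ⬝ᵥ (star W * W) *ᵥ y = W *ᵥ x ⬝ᵥ W *ᵥ y := fun x y => by
    rw [← mulVec_mulVec, dotProduct_mulVec, star_eq_conjTranspose, vecMul_conjTranspose]
    simp only [star_trivial]
  simpa only [hW] using dotProduct_sq_le (W *ᵥ x) (W *ᵥ y)

lemma PosSemidef.dotProduct_mulVec_mul_le [DecidableEq ι] {A : Matrix ι ι ℝ} (hA : A.PosSemidef)
    (v : ι → ℝ) :
    (v ⬝ᵥ A *ᵥ v) * (A *ᵥ v ⬝ᵥ A *ᵥ v) ≤ (v ⬝ᵥ v) * (A *ᵥ v ⬝ᵥ A *ᵥ (A *ᵥ v)) := by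
  have h₁ := dotProduct_sq_le v (A *ᵥ v)
  have h₂ := hA.dotProduct_mulVec_sq_le v (A *ᵥ v)
  rw [hA.isHermitian.dotProduct_mulVec_comm v (A *ᵥ v)] at h₂
  have ha : 0 ≤ v ⬝ᵥ A *ᵥ v := by simpa using hA.dotProduct_mulVec_nonneg v
  have hb : 0 ≤ A *ᵥ v ⬝ᵥ A *ᵥ v := by simpa using dotProduct_star_self_nonneg (A *ᵥ v)
  have hc : 0 ≤ v ⬝ᵥ v := by simpa using dotProduct_star_self_nonneg v
  -- `h₁ * h₂` reads `(ab)² ≤ (ab)(cd)`; cancel `ab` unless it vanishes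
  rcases (mul_nonneg ha hb).eq_or_lt with h | h
  · rw [← h]
    simpa using mul_nonneg hc (hA.dotProduct_mulVec_nonneg (A *ᵥ v))
  · nlinarith [mul_le_mul h₁ h₂ (sq_nonneg _) (mul_nonneg hc hb)]

noncomputable def rayleighQuotient (A : Matrix ι ι ℝ) (v : ι → ℝ) : ℝ := (v ⬝ᵥ A *ᵥ v) / (v ⬝ᵥ v)

lemma rayleighQuotient_eq_of_dotProduct_self_eq_one (A : Matrix ι ι ℝ) {v : ι → ℝ}
    (hv : v ⬝ᵥ v = 1) : rayleighQuotient A v = v ⬝ᵥ A *ᵥ v := by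
  rw [rayleighQuotient, hv, div_one]

lemma dotProduct_mulVec_normalize (A : Matrix ι ι ℝ) (v : ι → ℝ) :
    (√(v ⬝ᵥ v))⁻¹ • v ⬝ᵥ A *ᵥ ((√(v ⬝ᵥ v))⁻¹ • v) = rayleighQuotient A v := by
  have hc : 0 ≤ v ⬝ᵥ v := by simpa using dotProduct_star_self_nonneg v
  rw [mulVec_smul, smul_dotProduct, dotProduct_smul, smul_eq_mul, smul_eq_mul, ← mul_assoc,
    ← mul_inv, Real.mul_self_sqrt hc, rayleighQuotient, inv_mul_eq_div]

lemma dotProduct_self_normalize {v : ι → ℝ} (hv : v ≠ 0) :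
    (√(v ⬝ᵥ v))⁻¹ • v ⬝ᵥ (√(v ⬝ᵥ v))⁻¹ • v = 1 := by
  have hc : 0 < v ⬝ᵥ v := by simpa using dotProduct_star_self_pos_iff.mpr hv
  rw [smul_dotProduct, dotProduct_smul, smul_eq_mul, smul_eq_mul, ← mul_assoc, ← mul_inv,
    Real.mul_self_sqrt hc.le, inv_mul_cancel₀ hc.ne']

lemma PosSemidef.rayleighQuotient_le_one_add_smul_mulVec [DecidableEq ι] {A : Matrix ι ι ℝ}
    (hA : A.PosSemidef) {k : ℝ} (hk : 0 ≤ k) (v : ι → ℝ) :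
    rayleighQuotient A v ≤ rayleighQuotient A ((1 + k • A) *ᵥ v) := by
  have hsymm := hA.isHermitian.dotProduct_mulVec_comm
  have hu : (1 + k • A) *ᵥ v = v + k • A *ᵥ v := by
    rw [add_mulVec, one_mulVec, smul_mulVec]
  have huu : (1 + k • A) *ᵥ v ⬝ᵥ (1 + k • A) *ᵥ v =
      v ⬝ᵥ v + 2 * k * (v ⬝ᵥ A *ᵥ v) + k ^ 2 * (A *ᵥ v ⬝ᵥ A *ᵥ v) := by
    simp only [hu, dotProduct_add, add_dotProduct, dotProduct_smul, smul_dotProduct, smul_eq_mul,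
      ← hsymm v v]
    ring
  have huAu : (1 + k • A) *ᵥ v ⬝ᵥ A *ᵥ ((1 + k • A) *ᵥ v) =
      v ⬝ᵥ A *ᵥ v + 2 * k * (A *ᵥ v ⬝ᵥ A *ᵥ v) + k ^ 2 * (A *ᵥ v ⬝ᵥ A *ᵥ (A *ᵥ v)) := by
    simp only [hu, mulVec_add, mulVec_smul, dotProduct_add, add_dotProduct, dotProduct_smul,
      smul_dotProduct, smul_eq_mul, hsymm v (A *ᵥ v)]
    ring
  rcases eq_or_ne v 0 with rfl | hv
  · simp [rayleighQuotient]
  have hc : 0 < v ⬝ᵥ v := by simpa using dotProduct_star_self_pos_iff.mpr hv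
  have ha : 0 ≤ v ⬝ᵥ A *ᵥ v := by simpa using hA.dotProduct_mulVec_nonneg v
  have hb : 0 ≤ A *ᵥ v ⬝ᵥ A *ᵥ v := by simpa using dotProduct_star_self_nonneg (A *ᵥ v)
  rw [rayleighQuotient, rayleighQuotient, huu, huAu, div_le_div_iff₀ hc (by positivity)]
  nlinarith [mul_nonneg (mul_nonneg zero_le_two hk)
      (sub_nonneg.mpr (dotProduct_sq_le v (A *ᵥ v))),
    mul_nonneg (sq_nonneg k) (sub_nonneg.mpr (hA.dotProduct_mulVec_mul_le v))]

lemma eq_one_add_smul_mulVec_of_imex_step [DecidableEq ι] {B C : Matrix ι ι ℝ} {k : ℝ} (hk : k ≠ 0)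
    (hS : IsUnit (1 - k • C)) {x y : ι → ℝ}
    (h : (fun i => (x i - y i) / k) = fun i => -(B *ᵥ x) i - (C *ᵥ y) i) :
    y = (1 + k • ((1 - k • C)⁻¹ * (B + C))) *ᵥ x := by
  have hstep : (1 + k • B) *ᵥ x = (1 - k • C) *ᵥ y := by
    ext i
    have hi := (div_eq_iff hk).mp (congrFun h i)
    simp only [add_mulVec, sub_mulVec, one_mulVec, smul_mulVec, Pi.add_apply, Pi.sub_apply,
      Pi.smul_apply, smul_eq_mul]
    linarith
  have hdet : IsUnit (1 - k • C).det := (isUnit_iff_isUnit_det _).mp hS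
  have hfactor : (1 - k • C) * (1 + k • ((1 - k • C)⁻¹ * (B + C))) = 1 + k • B := by
    rw [mul_add, mul_one, Matrix.mul_smul, ← mul_assoc, mul_nonsing_inv _ hdet, one_mul]
    module
  apply mulVec_injective_iff_isUnit.mpr hS
  rw [mulVec_mulVec, hfactor, hstep]

end Matrix

theorem stmt12 {n : ℕ} (B C : Matrix (Fin n) (Fin n) ℝ)
    (hB : B.PosDef) (hC : C.PosDef) (hcomm : B * C = C * B)
    (k : ℝ) (hk : 0 < k) (hρ : ∀ μ ∈ spectrum ℝ (k • C), |μ| < 1)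
    (U : ℕ → Fin n → ℝ) (hU0 : U 0 ⬝ᵥ U 0 = 1)
    (Ut : ℕ → Fin n → ℝ)
    (hscheme : ∀ m : ℕ,
      (fun i => (Ut m i - U m i) / k) =
        (fun i => -(B *ᵥ Ut m) i - (C *ᵥ U m) i))
    (hstep : ∀ m : ℕ,
      U (m + 1) = (Real.sqrt (Ut m ⬝ᵥ Ut m))⁻¹ • Ut m) :
    ∀ m : ℕ,
      U (m + 1) ⬝ᵥ ((((1 : Matrix (Fin n) (Fin n) ℝ) - k • C)⁻¹ * (B + C)) *ᵥ U (m + 1)) ≤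
        U m ⬝ᵥ ((((1 : Matrix (Fin n) (Fin n) ℝ) - k • C)⁻¹ * (B + C)) *ᵥ U m) := by
  set A := (1 - k • C)⁻¹ * (B + C)
  have hS : (1 - k • C).PosDef :=
    posDef_one_sub_of_spectrum_lt_one (hC.isHermitian.smul (IsSelfAdjoint.all k))
      fun μ hμ => (abs_lt.mp (hρ μ hμ)).2
  have hA : A.PosSemidef := hS.inv_mul_posSemidef_of_commute (hB.add hC).posSemidef
    ((Commute.one_left _).sub_left ((Commute.add_right hcomm.symm (Commute.refl C)).smul_left k))
  have hU : ∀ m, U m = (1 + k • A) *ᵥ Ut m := fun m =>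
    eq_one_add_smul_mulVec_of_imex_step hk.ne' hS.isUnit (hscheme m)
  have hnorm : ∀ m, U m ⬝ᵥ U m = 1 := by
    intro m
    induction m with
    | zero => exact hU0
    | succ m ih =>
      rw [hstep m]
      refine dotProduct_self_normalize fun hUt => ?_
      simp [hU m, hUt] at ih
  intro m
  rw [hstep m, dotProduct_mulVec_normalize,
    ← rayleighQuotient_eq_of_dotProduct_self_eq_one _ (hnorm m), hU m]
  exact hA.rayleighQuotient_le_one_add_smul_mulVec hk.le _
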